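/- Performance difference lemma: For any two policies π and π' in a discounted MDP with discount γ ∈ [0,1) and bounded rewards, V^{π'}(s_0) − V^π(s_0) = (1/(1−γ)) · E_{(s,a) ∼ d^{π'}_{s_0}}[A^π(s,a)], where d^{π'}_{s_0}(s,a) = (1−γ)Σ_{t≥0} γ^t Pr^{π'}(s_t=s, a_t=a | s_0) and A^π(s,a) = Q^π(s,a) − V^π(s). -/
import Mathlib


/-- Performance difference lemma: for policies `π` (with value `V`, action-value `Q`)
and `π'` (with value `V'` and discounted occupancy measure `d` from start state `s₀`),
`V'(s₀) - V(s₀) = (1/(1-γ)) · E_{(s,a)∼d}[A^π(s,a)]` where `A^π(s,a) = Q(s,a) - V(s)`.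
The value, action-value, and occupancy functions are characterized by their Bellman /
flow fixed-point equations. -/
theorem stmt13 {S A : Type*} [Fintype S] [Fintype A] [DecidableEq S]
    (γ : ℝ) (hγ0 : 0 ≤ γ) (hγ1 : γ < 1)
    (P : S → A → S → ℝ) (hP0 : ∀ s a s', 0 ≤ P s a s')
    (hP1 : ∀ s a, ∑ s', P s a s' = 1)
    (r : S → A → ℝ) (hr : ∀ s a, r s a ∈ Set.Icc (0 : ℝ) 1)
    (π π' : S → A → ℝ)
    (hπ0 : ∀ s a, 0 ≤ π s a) (hπ1 : ∀ s, ∑ a, π s a = 1)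
    (hπ'0 : ∀ s a, 0 ≤ π' s a) (hπ'1 : ∀ s, ∑ a, π' s a = 1)
    (s₀ : S)
    (V V' : S → ℝ) (Q : S → A → ℝ)
    (hQ : ∀ s a, Q s a = r s a + γ * ∑ s', P s a s' * V s')
    (hV : ∀ s, V s = ∑ a, π s a * Q s a)
    (hV' : ∀ s, V' s = ∑ a, π' s a * (r s a + γ * ∑ s', P s a s' * V' s'))
    (d : S → A → ℝ)
    (hd : ∀ s a, d s a = π' s a *
      ((1 - γ) * (if s = s₀ then 1 else 0) + γ * ∑ s', ∑ a', d s' a' * P s' a' s)) :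
    V' s₀ - V s₀ = (1 / (1 - γ)) * ∑ s, ∑ a, d s a * (Q s a - V s) := by
  have hne : (1 - γ) ≠ 0 := by linarith
  have hsum : ∀ s, ∑ a, d s a
      = (1 - γ) * (if s = s₀ then 1 else 0) + γ * ∑ s', ∑ a', d s' a' * P s' a' s := by
    intro s
    calc ∑ a, d s a = (∑ a, π' s a) * ((1 - γ) * (if s = s₀ then 1 else 0)
          + γ * ∑ s', ∑ a', d s' a' * P s' a' s) := by
          rw [Finset.sum_mul]; exact Finset.sum_congr rfl fun a _ => hd s a
      _ = _ := by rw [hπ'1, one_mul]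
  -- Key flow identity: for any f, ∑ d·(f - γPf) = (1-γ) f s₀
  have key : ∀ f : S → ℝ,
      ∑ s, ∑ a, d s a * (f s - γ * ∑ s', P s a s' * f s') = (1 - γ) * f s₀ := by
    intro f
    have e1 : ∑ s, ∑ a, d s a * (f s - γ * ∑ s', P s a s' * f s')
        = (∑ s, (∑ a, d s a) * f s) - γ * ∑ s, ∑ a, ∑ s', d s a * P s a s' * f s' := by
      rw [Finset.mul_sum, ← Finset.sum_sub_distrib]
      refine Finset.sum_congr rfl fun s _ => ?_
      rw [Finset.sum_mul, Finset.mul_sum, ← Finset.sum_sub_distrib]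
      refine Finset.sum_congr rfl fun a _ => ?_
      rw [mul_sub, Finset.mul_sum]
      congr 1
      rw [Finset.mul_sum, Finset.mul_sum]
      exact Finset.sum_congr rfl fun s' _ => by ring
    have e3 : ∑ s, ∑ a, ∑ s', d s a * P s a s' * f s'
        = ∑ s, (∑ s', ∑ a', d s' a' * P s' a' s) * f s := by
      calc ∑ s, ∑ a, ∑ s', d s a * P s a s' * f s'
          = ∑ s, ∑ s', ∑ a, d s a * P s a s' * f s' :=
            Finset.sum_congr rfl fun s _ => Finset.sum_comm
        _ = ∑ s', ∑ s, ∑ a, d s a * P s a s' * f s' := Finset.sum_comm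
        _ = ∑ s, (∑ s', ∑ a', d s' a' * P s' a' s) * f s := by
            refine Finset.sum_congr rfl fun s' _ => ?_
            rw [Finset.sum_mul]
            exact Finset.sum_congr rfl fun s _ => (Finset.sum_mul _ _ _).symm
    have e2 : ∑ s, (∑ a, d s a) * f s
        = (1 - γ) * f s₀ + γ * ∑ s, (∑ s', ∑ a', d s' a' * P s' a' s) * f s := by
      simp_rw [hsum, add_mul, Finset.sum_add_distrib, mul_assoc, ite_mul, one_mul, zero_mul,
        ← Finset.mul_sum]
      congr 1
      rw [Finset.sum_ite_eq' Finset.univ s₀ f]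
      simp
    rw [e1, e3, e2]; ring
  -- ∑ d·r = (1-γ) V'(s₀)
  have hbell : ∀ s, ∑ a, d s a * (r s a + γ * ∑ s', P s a s' * V' s')
      = ∑ a, d s a * V' s := by
    intro s
    calc ∑ a, d s a * (r s a + γ * ∑ s', P s a s' * V' s')
        = ((1 - γ) * (if s = s₀ then 1 else 0) + γ * ∑ s', ∑ a', d s' a' * P s' a' s)
          * ∑ a, π' s a * (r s a + γ * ∑ s', P s a s' * V' s') := by
          rw [Finset.mul_sum]
          exact Finset.sum_congr rfl fun a _ => by rw [hd s a]; ring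
      _ = (∑ a, d s a) * V' s := by rw [← hV', hsum]
      _ = ∑ a, d s a * V' s := Finset.sum_mul _ _ _
  have hdr : ∑ s, ∑ a, d s a * r s a = (1 - γ) * V' s₀ := by
    have : ∑ s, ∑ a, d s a * r s a
        = ∑ s, ((∑ a, d s a * (r s a + γ * ∑ s', P s a s' * V' s'))
            - ∑ a, d s a * (γ * ∑ s', P s a s' * V' s')) := by
      refine Finset.sum_congr rfl fun s _ => ?_
      rw [← Finset.sum_sub_distrib]
      exact Finset.sum_congr rfl fun a _ => by ring
    rw [this]
    simp_rw [hbell]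
    rw [← key V']
    refine Finset.sum_congr rfl fun s _ => ?_
    rw [← Finset.sum_sub_distrib]
    exact Finset.sum_congr rfl fun a _ => by ring
  -- main computation
  have hmain : ∑ s, ∑ a, d s a * (Q s a - V s) = (1 - γ) * V' s₀ - (1 - γ) * V s₀ := by
    have : ∑ s, ∑ a, d s a * (Q s a - V s)
        = (∑ s, ∑ a, d s a * r s a)
          - ∑ s, ∑ a, d s a * (V s - γ * ∑ s', P s a s' * V s') := by
      rw [← Finset.sum_sub_distrib]
      refine Finset.sum_congr rfl fun s _ => ?_
      rw [← Finset.sum_sub_distrib]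
      refine Finset.sum_congr rfl fun a _ => ?_
      rw [hQ s a]; ring
    rw [this, hdr, key V]
  rw [hmain]
  field_simp
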